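/- Let c ≥ 1 be an integer, k an odd positive integer, ζ a primitive 2c-th root of unity, d, z ≥ 0 integers, and P ∈ ℤ[ζ][x]. If n ≥ (deg(P)+2d+1)·kc, then Φ_{kc}(q)^{d+1} divides ∑_{m=0}^{n} ζ^m P(m) q^{zm} binom(n,m)_q in ℤ[ζ][q]. -/

import Mathlib

/-!
Put `N = k c` and `ε = ζ`, so `ε ^ N = -1`, write `S(n, z, f) = ∑_m ε^m f(m) q^{zm} [n, m]_q`
and induct on `n`. Applying the q-Pascal rule `N`
times writes the sum `S(n' + N, z, f)` as `∑_j ε^j q^{jz} [N, j]_q S(n', z + N - j, f(· + j))`.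
For `0 < j < N` we have `Φ_N ∣ [N, j]_q`, so these terms gain a factor `Φ_N`. Using `ε^N = -1`,
the two extreme terms combine to `S(n', z + N, f) - q^{Nz} S(n', z, f(· + N))`; expanding
`q^{Nm} = ∑_t (q^N - 1)^t (m choose t)` and `f(m + N) = ∑_t (N choose t) Δ^t f(m)` leaves
`(1 - q^{Nz}) S(n', z, f)`, terms `(q^N - 1)^t S(n', z, (· choose t) f)` in which the degree of
the coefficient grows by `t` but `Φ_N^t` is gained, and terms with `Δ^t f` of lower degree.
The bound `(deg f + 2d + 1) N ≤ n` is what this bookkeeping consumes.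
-/

open Polynomial Finset

/-- The Gaussian (q-)binomial coefficient as a polynomial, satisfying the
product formula `∏_{i=n-m+1}^{n}(1-q^i) / ∏_{i=1}^{m}(1-q^i)`. -/
noncomputable def qbinom (R : Type*) [CommRing R] : ℕ → ℕ → Polynomial R
  | _, 0 => 1
  | 0, _+1 => 0
  | n+1, m+1 => qbinom R n (m+1) + X ^ (n - m) * qbinom R n m

/-- The subring ℤ[ζ] of ℂ. -/
noncomputable abbrev Zadj (ζ : ℂ) : Type := Algebra.adjoin ℤ ({ζ} : Set ℂ)

/-- ζ as an element of ℤ[ζ]. -/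
noncomputable def zeta (ζ : ℂ) : Zadj ζ := ⟨ζ, Algebra.self_mem_adjoin_singleton ℤ ζ⟩

section qbinom

variable {R : Type*} [CommRing R]

@[simp]
lemma qbinom_zero_right (n : ℕ) : qbinom R n 0 = 1 := by cases n <;> rfl

lemma qbinom_succ_succ (n m : ℕ) :
    qbinom R (n + 1) (m + 1) = qbinom R n (m + 1) + X ^ (n - m) * qbinom R n m := rfl

lemma qbinom_eq_zero_of_lt {n m : ℕ} (h : n < m) : qbinom R n m = 0 := by
  induction n generalizing m with
  | zero => obtain ⟨m, rfl⟩ := Nat.exists_eq_add_of_lt h; rfl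
  | succ n ih =>
    obtain ⟨m, rfl⟩ := Nat.exists_eq_succ_of_ne_zero (by omega : m ≠ 0)
    rw [qbinom_succ_succ, ih (by omega), ih (by omega), mul_zero, add_zero]

@[simp]
lemma qbinom_self (n : ℕ) : qbinom R n n = 1 := by
  induction n with
  | zero => rfl
  | succ n ih => rw [qbinom_succ_succ, qbinom_eq_zero_of_lt (by omega), ih]; simp

lemma qbinom_mul_prod (n m : ℕ) :
    qbinom R n m * ∏ i ∈ range m, (X ^ (i + 1) - 1) = ∏ i ∈ range m, (X ^ (n - i) - 1) := by
  induction n generalizing m with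
  | zero => cases m <;> simp [qbinom_eq_zero_of_lt, prod_range_succ']
  | succ n ih =>
    cases m with
    | zero => simp
    | succ m =>
      rcases lt_or_ge n m with hnm | hmn
      · rw [qbinom_eq_zero_of_lt (by omega), zero_mul, eq_comm]
        exact prod_eq_zero (i := n + 1) (mem_range.2 (by omega)) (by simp)
      rw [qbinom_succ_succ, add_mul, ih, prod_range_succ, prod_range_succ, prod_range_succ',
        ← mul_assoc, mul_assoc _ (qbinom R n m), ih]
      simp only [Nat.add_sub_add_right, Nat.sub_zero]
      have hpow : (X : R[X]) ^ (n - m) * X ^ (m + 1) = X ^ (n + 1) := by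
        rw [← pow_add]; congr 1; omega
      linear_combination (∏ i ∈ range m, (X ^ (n - i) - 1 : R[X])) * hpow

lemma monic_prod_X_pow_succ_sub_one (m : ℕ) :
    (∏ i ∈ range m, (X ^ (i + 1) - 1) : R[X]).Monic :=
  monic_prod_of_monic _ _ fun i _ => by simpa using monic_X_pow_sub_C (1 : R) i.succ_ne_zero

lemma qbinom_succ_right_mul (n m : ℕ) :
    qbinom R n (m + 1) * (X ^ (m + 1) - 1) = qbinom R n m * (X ^ (n - m) - 1) := by
  refine (monic_prod_X_pow_succ_sub_one (R := R) m).isRegular.right ?_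
  simp only
  rw [mul_right_comm, mul_assoc, ← prod_range_succ (fun i => (X : R[X]) ^ (i + 1) - 1),
    qbinom_mul_prod, mul_right_comm, qbinom_mul_prod, prod_range_succ]

lemma qbinom_succ_succ' (n m : ℕ) :
    qbinom R (n + 1) (m + 1) = X ^ (m + 1) * qbinom R n (m + 1) + qbinom R n m := by
  linear_combination qbinom_succ_succ (R := R) n m - qbinom_succ_right_mul (R := R) n m

lemma map_qbinom {S : Type*} [CommRing S] (g : R →+* S) (n m : ℕ) :
    (qbinom R n m).map g = qbinom S n m := by
  induction n generalizing m with
  | zero => cases m <;> simp [qbinom]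
  | succ n ih =>
    cases m with
    | zero => simp
    | succ m => simp [qbinom_succ_succ, ih]

lemma cyclotomic_not_dvd_X_pow_sub_one {N s : ℕ} (hs : 0 < s) (hsN : s < N) :
    ¬ cyclotomic N ℤ ∣ X ^ s - 1 := by
  intro h
  have hω := Complex.isPrimitiveRoot_exp N (by omega)
  have hdvd : cyclotomic N ℂ ∣ X ^ s - 1 := by
    simpa using Polynomial.map_dvd (Int.castRingHom ℂ) h
  have hroot := (hω.isRoot_cyclotomic (by omega)).dvd hdvd
  rw [IsRoot, eval_sub, eval_pow, eval_X, eval_one, sub_eq_zero] at hroot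
  exact absurd (Nat.le_of_dvd hs (hω.dvd_of_pow_eq_one s hroot)) (by omega)

lemma cyclotomic_dvd_qbinom {N j : ℕ} (hj : 0 < j) (hjN : j < N) :
    cyclotomic N R ∣ qbinom R N j := by
  suffices hℤ : cyclotomic N ℤ ∣ qbinom ℤ N j by
    simpa [map_qbinom] using Polynomial.map_dvd (Int.castRingHom R) hℤ
  have hprime : Prime (cyclotomic N ℤ) := (cyclotomic.irreducible (by omega)).prime
  have hdvd : cyclotomic N ℤ ∣ qbinom ℤ N j * ∏ i ∈ range j, (X ^ (i + 1) - 1) := by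
    have h0 := dvd_prod_of_mem (fun i => (X : ℤ[X]) ^ (N - i) - 1) (mem_range.2 hj)
    rw [Nat.sub_zero] at h0
    rw [qbinom_mul_prod]
    exact (cyclotomic.dvd_X_pow_sub_one N ℤ).trans h0
  refine (hprime.dvd_mul.1 hdvd).resolve_right fun h => ?_
  obtain ⟨i, hi, hi'⟩ := (hprime.dvd_finsetProd_iff _).1 h
  exact cyclotomic_not_dvd_X_pow_sub_one i.succ_pos (by simp at hi; omega) hi'

end qbinom

open fwdDiff

/-- Degree `≤ D` in the sense of finite differences rather than as a polynomial over the
coefficient ring: unlike polynomials, this class contains `m ↦ m.choose t` over every ring. -/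
def FwdDiffDegreeLE {G : Type*} [AddCommGroup G] (f : ℕ → G) (D : ℕ) : Prop :=
  Δ_[1] ^[D + 1] f = 0

namespace FwdDiffDegreeLE

section AddCommGroup

variable {G : Type*} [AddCommGroup G] {f g : ℕ → G} {D : ℕ}

lemma fwdDiff_iter_eq_zero (h : FwdDiffDegreeLE f D) {s : ℕ} (hs : D < s) :
    Δ_[1] ^[s] f = 0 := by
  obtain ⟨t, rfl⟩ := Nat.exists_eq_add_of_le hs
  rw [add_comm, Function.iterate_add_apply, h]
  exact Function.iterate_fixed (fwdDiff_const 1 (0 : G)) t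

lemma mono (h : FwdDiffDegreeLE f D) {E : ℕ} (hDE : D ≤ E) : FwdDiffDegreeLE f E :=
  h.fwdDiff_iter_eq_zero (by omega)

lemma fwdDiff_iter (h : FwdDiffDegreeLE f D) (t : ℕ) :
    FwdDiffDegreeLE (Δ_[1] ^[t] f) (D - t) := by
  rw [FwdDiffDegreeLE, ← Function.iterate_add_apply]
  exact h.fwdDiff_iter_eq_zero (by omega)

lemma comp_add (h : FwdDiffDegreeLE f D) (j : ℕ) : FwdDiffDegreeLE (fun m => f (m + j)) D := by
  unfold FwdDiffDegreeLE
  funext m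
  rw [fwdDiff_iter_comp_add, h]
  rfl

lemma add (hf : FwdDiffDegreeLE f D) (hg : FwdDiffDegreeLE g D) : FwdDiffDegreeLE (f + g) D := by
  rw [FwdDiffDegreeLE, fwdDiff_iter_add, hf, hg, add_zero]

lemma eq_const (h : FwdDiffDegreeLE f 0) (m : ℕ) : f m = f 0 := by
  induction m with
  | zero => rfl
  | succ m ih => rw [← ih, ← sub_eq_zero]; exact congrFun (h : Δ_[1] f = 0) m

end AddCommGroup

variable {R : Type*} [CommRing R]

lemma const_mul {f : ℕ → R} {D : ℕ} (h : FwdDiffDegreeLE f D) (c : R) :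
    FwdDiffDegreeLE (fun m => c * f m) D := by
  change Δ_[1] ^[D + 1] (c • f) = 0
  rw [fwdDiff_iter_const_smul, h, smul_zero]

lemma mul {f g : ℕ → R} {a b : ℕ} (hf : FwdDiffDegreeLE f a) (hg : FwdDiffDegreeLE g b) :
    FwdDiffDegreeLE (f * g) (a + b) := by
  induction hs : a + b using Nat.strong_induction_on generalizing a b f g with
  | _ s ih =>
  subst hs
  cases a with
  | zero =>
    have hfg : f * g = fun m => f 0 * g m := funext fun m => by rw [Pi.mul_apply, hf.eq_const m]
    simpa [hfg] using hg.const_mul (f 0)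
  | succ a =>
  cases b with
  | zero =>
    have hfg : f * g = fun m => g 0 * f m :=
      funext fun m => by rw [Pi.mul_apply, hg.eq_const m, mul_comm]
    simpa [hfg] using hf.const_mul (g 0)
  | succ b =>
  have hleibniz : Δ_[1] (f * g) = (fun m => f (m + 1)) * Δ_[1] g + Δ_[1] f * g := by
    funext m; simp only [fwdDiff, Pi.mul_apply, Pi.add_apply]; ring
  have h₁ : FwdDiffDegreeLE ((fun m => f (m + 1)) * Δ_[1] g) (a + 1 + b) :=
    ih _ (by omega) (hf.comp_add 1) (hg.fwdDiff_iter 1) rfl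
  have h₂ : FwdDiffDegreeLE (Δ_[1] f * g) (a + (b + 1)) :=
    ih _ (by omega) (hf.fwdDiff_iter 1) hg rfl
  have hΔ : FwdDiffDegreeLE (Δ_[1] (f * g)) (a + 1 + b) := by
    rw [hleibniz]
    exact h₁.add (h₂.mono (by omega))
  rw [FwdDiffDegreeLE, Function.iterate_succ_apply]
  exact hΔ

lemma choose (t : ℕ) : FwdDiffDegreeLE (fun m => (m.choose t : R)) t := by
  induction t with
  | zero => unfold FwdDiffDegreeLE; funext m; simp [fwdDiff]
  | succ t ih =>
    have hstep : Δ_[1] (fun m => (m.choose (t + 1) : R)) = fun m => (m.choose t : R) := by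
      funext m; simp [fwdDiff, Nat.choose_succ_succ']
    rw [FwdDiffDegreeLE, Function.iterate_succ_apply, hstep]
    exact ih

lemma eval (P : R[X]) : FwdDiffDegreeLE (fun m : ℕ => P.eval (m : R)) P.natDegree := by
  unfold FwdDiffDegreeLE
  funext y
  have h := congrFun P.fwdDiff_iter_degree_add_one_eq_zero (y : R)
  simpa [fwdDiff_iter_eq_sum_shift] using h

end FwdDiffDegreeLE

section qbinomSum

variable {R : Type*} [CommRing R]

noncomputable def qbinomSum (ε : R) (n z : ℕ) (f : ℕ → R) : R[X] :=
  ∑ m ∈ range (n + 1), C (ε ^ m * f m) * X ^ (z * m) * qbinom R n m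

section

variable (ε : R) (n z : ℕ)

@[simp]
lemma qbinomSum_zero : qbinomSum ε n z 0 = 0 := by simp [qbinomSum]

lemma qbinomSum_const_mul (c : R) (f : ℕ → R) :
    qbinomSum ε n z (fun m => c * f m) = C c * qbinomSum ε n z f := by
  simp only [qbinomSum, mul_sum, mul_left_comm _ c, C_mul, mul_assoc]

lemma qbinomSum_sum {ι : Type*} (s : Finset ι) (f : ι → ℕ → R) :
    qbinomSum ε n z (fun m => ∑ i ∈ s, f i m) = ∑ i ∈ s, qbinomSum ε n z (f i) := by
  simp only [qbinomSum, mul_sum, map_sum, sum_mul]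
  exact sum_comm

lemma qbinomSum_succ (f : ℕ → R) :
    qbinomSum ε (n + 1) z f =
      qbinomSum ε n (z + 1) f + C ε * X ^ z * qbinomSum ε n z (fun m => f (m + 1)) := by
  have hext : qbinomSum ε n (z + 1) f =
      ∑ m ∈ range (n + 2), C (ε ^ m * f m) * X ^ ((z + 1) * m) * qbinom R n m := by
    rw [sum_range_succ, qbinom_eq_zero_of_lt n.lt_succ_self, mul_zero, add_zero, qbinomSum]
  rw [hext, qbinomSum, qbinomSum, sum_range_succ', sum_range_succ' _ (n + 1), mul_sum,
    add_right_comm, ← sum_add_distrib]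
  simp only [qbinom_succ_succ', qbinom_zero_right, mul_zero, pow_zero]
  congr 1
  refine sum_congr rfl fun m _ => ?_
  simp only [C_mul, C_pow]
  ring

lemma qbinomSum_add (f : ℕ → R) (r : ℕ) :
    qbinomSum ε (n + r) z f = ∑ p ∈ antidiagonal r, C (ε ^ p.2) * X ^ (p.2 * z) *
      qbinom R r p.2 * qbinomSum ε n (z + p.1) (fun m => f (m + p.2)) := by
  induction r generalizing n with
  | zero => simp
  | succ r ih =>
    set h : ℕ × ℕ → R[X] := fun p => C (ε ^ p.2) * X ^ (p.2 * z) *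
      qbinom R r p.2 * qbinomSum ε n (z + p.1) (fun m => f (m + p.2))
    have hshift : h (0, r + 1) + ∑ p ∈ antidiagonal r, h (p.1 + 1, p.2) =
        h (r + 1, 0) + ∑ p ∈ antidiagonal r, h (p.1, p.2 + 1) :=
      Nat.sum_antidiagonal_succ.symm.trans Nat.sum_antidiagonal_succ'
    simp only [h, qbinom_eq_zero_of_lt r.lt_succ_self, mul_zero, zero_mul, zero_add,
      ← add_assoc z] at hshift
    rw [← add_assoc, add_right_comm, ih, Nat.sum_antidiagonal_succ']
    simp only [qbinomSum_succ, mul_add, sum_add_distrib]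
    rw [hshift, add_assoc, ← sum_add_distrib]
    congr 1
    · simp [add_assoc]
    refine sum_congr rfl fun p hp => ?_
    rw [qbinom_succ_succ, show r - p.2 = p.1 by rw [← mem_antidiagonal.1 hp]; simp]
    simp only [add_right_comm _ 1 p.2, add_assoc _ p.2 1, C_pow]
    ring

lemma qbinomSum_add_exponent (N : ℕ) (f : ℕ → R) :
    qbinomSum ε n (z + N) f = ∑ t ∈ range (n + 1),
      (X ^ N - 1) ^ t * qbinomSum ε n z (fun m => m.choose t * f m) := by
  simp only [qbinomSum, mul_sum]
  rw [sum_comm]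
  refine sum_congr rfl fun m hm => ?_
  have hbinom : ∑ t ∈ range (n + 1), (X ^ N - 1) ^ t * (m.choose t : R[X]) = X ^ (N * m) := by
    have h := add_pow (X ^ N - 1 : R[X]) 1 m
    rw [sub_add_cancel, ← pow_mul] at h
    simp only [h, one_pow, mul_one]
    refine (sum_subset (range_subset_range.2 (by simpa using hm)) fun t _ ht => ?_).symm
    rw [Nat.choose_eq_zero_of_lt (by simpa using ht), Nat.cast_zero, mul_zero]
  calc C (ε ^ m * f m) * X ^ ((z + N) * m) * qbinom R n m
      = (∑ t ∈ range (n + 1), (X ^ N - 1) ^ t * (m.choose t : R[X])) *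
          (C (ε ^ m * f m) * X ^ (z * m) * qbinom R n m) := by
        rw [hbinom, add_mul, pow_add]; ring
    _ = _ := by
        rw [sum_mul]
        refine sum_congr rfl fun t _ => ?_
        simp only [C_mul, map_natCast]
        ring

lemma qbinomSum_comp_add (N : ℕ) (f : ℕ → R) :
    qbinomSum ε n z (fun m => f (m + N)) =
      ∑ t ∈ range (N + 1), (N.choose t : R[X]) * qbinomSum ε n z (Δ_[1] ^[t] f) := by
  have hnewton : (fun m => f (m + N)) =
      fun m => ∑ t ∈ range (N + 1), (N.choose t : R) * Δ_[1] ^[t] f m :=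
    funext fun m => by simpa [nsmul_eq_mul] using shift_eq_sum_fwdDiff_iter 1 f N m
  simp only [hnewton, qbinomSum_sum, qbinomSum_const_mul, map_natCast]

lemma qbinomSum_add_eq_of_pow_eq_neg_one {N : ℕ} (hN : 0 < N) (hε : ε ^ N = -1)
    (f : ℕ → R) :
    qbinomSum ε (n + N) z f =
      ∑ j ∈ Ico 1 N, C (ε ^ j) * X ^ (j * z) * qbinom R N j *
          qbinomSum ε n (z + (N - j)) (fun m => f (m + j))
        + (1 - X ^ (N * z)) * qbinomSum ε n z f
        + ∑ t ∈ Ico 1 (n + 1), (X ^ N - 1) ^ t * qbinomSum ε n z (fun m => m.choose t * f m)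
        - X ^ (N * z) *
            ∑ t ∈ Ico 1 (N + 1), (N.choose t : R[X]) * qbinomSum ε n z (Δ_[1] ^[t] f) := by
  rw [qbinomSum_add, ← Nat.sum_antidiagonal_swap]
  simp only [Prod.fst_swap, Prod.snd_swap]
  rw [Nat.sum_antidiagonal_eq_sum_range_succ (fun j i => C (ε ^ j) * X ^ (j * z) *
      qbinom R N j * qbinomSum ε n (z + i) (fun m => f (m + j))),
    range_eq_Ico, sum_Ico_succ_top (Nat.zero_le N),
    sum_eq_sum_Ico_succ_bot hN, qbinomSum_add_exponent, range_eq_Ico,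
    sum_eq_sum_Ico_succ_bot (Nat.succ_pos n), qbinomSum_comp_add, range_eq_Ico,
    sum_eq_sum_Ico_succ_bot (Nat.succ_pos N)]
  simp only [pow_zero, map_one, zero_mul, mul_one, qbinom_zero_right, tsub_zero,
    Nat.choose_zero_right, Nat.cast_one, add_zero, one_mul, zero_add, map_pow, hε, map_neg,
    neg_mul, qbinom_self, tsub_self, Function.iterate_zero, id_eq]
  ring

end

theorem cyclotomic_pow_dvd_qbinomSum {ε : R} {N : ℕ} (hN : 0 < N) (hε : ε ^ N = -1)
    {d D n : ℕ} (z : ℕ) {f : ℕ → R} (hf : FwdDiffDegreeLE f D)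
    (hn : (D + 2 * d + 1) * N ≤ n) :
    cyclotomic N R ^ (d + 1) ∣ qbinomSum ε n z f := by
  induction n using Nat.strong_induction_on generalizing d D z f with
  | _ n ih =>
  obtain ⟨n, rfl⟩ : ∃ n', n = n' + N :=
    ⟨n - N, by have := (Nat.le_mul_of_pos_left N (Nat.succ_pos _)).trans hn; omega⟩
  have hbound : ∀ {E}, E ≤ D + 2 * d + 1 → E * N ≤ n + N :=
    fun hE => (Nat.mul_le_mul_right N hE).trans hn
  have ih' : ∀ e D' z' (f' : ℕ → R), FwdDiffDegreeLE f' D' → (D' + 2 * e) * N ≤ n + N →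
      cyclotomic N R ^ e ∣ qbinomSum ε n z' f' := by
    rintro (_ | e) D' z' f' hf' he
    · exact one_dvd _
    · exact ih n (by omega) z' hf' (by nlinarith)
  have hΦ : cyclotomic N R ∣ X ^ N - 1 := cyclotomic.dvd_X_pow_sub_one N R
  rw [qbinomSum_add_eq_of_pow_eq_neg_one ε n z hN hε]
  refine dvd_sub (dvd_add (dvd_add ?_ ?_) ?_) (dvd_mul_of_dvd_right (dvd_sum fun t ht => ?_) _)
  · refine dvd_sum fun j hj => ?_
    obtain ⟨hj₀, hjN⟩ := mem_Ico.1 hj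
    rw [pow_succ']
    exact mul_dvd_mul ((cyclotomic_dvd_qbinom hj₀ hjN).mul_left _)
      (ih' d D _ _ (hf.comp_add j) (hbound (by omega)))
  · have h₁ : cyclotomic N R ∣ 1 - X ^ (N * z) :=
      (dvd_neg.2 (hΦ.trans (pow_one_sub_dvd_pow_mul_sub_one X N z))).trans (by rw [neg_sub])
    rw [pow_succ']
    exact mul_dvd_mul h₁ (ih' d D z f hf (hbound (by omega)))
  · refine dvd_sum fun t ht => ?_
    obtain ⟨ht₀, -⟩ := mem_Ico.1 ht
    rcases le_or_gt t (d + 1) with htd | htd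
    · rw [← Nat.add_sub_cancel' htd, pow_add]
      exact mul_dvd_mul (pow_dvd_pow_of_dvd hΦ t)
        (ih' _ _ z _ ((FwdDiffDegreeLE.choose t).mul hf) (hbound (by omega)))
    · exact dvd_mul_of_dvd_left ((pow_dvd_pow_of_dvd hΦ _).trans (pow_dvd_pow _ htd.le)) _
  · obtain ⟨ht₀, -⟩ := mem_Ico.1 ht
    rcases le_or_gt t D with htD | htD
    · exact dvd_mul_of_dvd_right
        (ih' (d + 1) (D - t) z _ (hf.fwdDiff_iter t) (hbound (by omega))) _
    · rw [hf.fwdDiff_iter_eq_zero htD, qbinomSum_zero, mul_zero]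
      exact dvd_zero _

end qbinomSum

theorem higher_order_vanishing_poly_general (c k : ℕ) (hk : Odd k)
    (ζ : ℂ) (hζ : IsPrimitiveRoot ζ (2 * c)) (d z : ℕ) (P : Polynomial (Zadj ζ)) (n : ℕ)
    (hn : (P.natDegree + 2 * d + 1) * (k * c) ≤ n) :
    Polynomial.cyclotomic (k * c) (Zadj ζ) ^ (d + 1) ∣
      ∑ m ∈ Finset.range (n + 1), C (zeta ζ ^ m * P.eval (m : Zadj ζ)) * X ^ (z * m) *
        qbinom (Zadj ζ) n m := by
  rcases Nat.eq_zero_or_pos c with rfl | hc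
  · simp -- `cyclotomic 0 = 1`
  have hζc : ζ ^ c = -1 := by
    have hprim := hζ.pow_of_dvd hc.ne' (dvd_mul_left c 2)
    rw [Nat.mul_div_cancel _ hc] at hprim
    exact hprim.eq_neg_one_of_two_right
  have hε : zeta ζ ^ (k * c) = -1 :=
    Subtype.ext <| by simp [zeta, pow_mul', hζc, hk.neg_one_pow]
  exact cyclotomic_pow_dvd_qbinomSum (Nat.mul_pos hk.pos hc) hε z (FwdDiffDegreeLE.eval P) hn

theorem higher_order_vanishing_poly (c k : ℕ) (hc : 1 ≤ c) (hk : Odd k) (hk0 : 0 < k)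
    (ζ : ℂ) (hζ : IsPrimitiveRoot ζ (2 * c)) (d z : ℕ) (P : Polynomial (Zadj ζ)) (n : ℕ)
    (hn : (P.natDegree + 2 * d + 1) * (k * c) ≤ n) :
    Polynomial.cyclotomic (k * c) (Zadj ζ) ^ (d + 1) ∣
      ∑ m ∈ Finset.range (n + 1), C (zeta ζ ^ m * P.eval (m : Zadj ζ)) * X ^ (z * m) *
        qbinom (Zadj ζ) n m :=
  higher_order_vanishing_poly_general c k hk ζ hζ d z P n hn
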